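/- Let N be an n-bit binary counter, let R be a valid configuration of N, and let u ∈ L_dec = ι_sync (ι_inc ι_rotr ι_off)* ι_dec (ι_off ι_rotr)* ι_sync be such that |R·u| = |R|. If v is the value of the counter under R and v′ is the value under R·u, then v′ = v − 1 ≥ 0 (in particular v ≥ 1). -/

import Mathlib

/-- Partial transformations on `Q` (partial functions `Q → Q`), with
left-to-right composition: `q·(fg) = (q·f)·g`. -/
def PTrans (Q : Type*) : Type _ := Q → Option Q

/-- The image `R·f` of a configuration `R` under a partial transformation `f`. -/
def pApply {Q : Type*} (R : Set Q) (f : PTrans Q) : Set Q :=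
  {q' | ∃ q ∈ R, f q = some q'}

/-- The image `R·u` of a configuration under a word of partial transformations. -/
def wordApply {Q : Type*} (R : Set Q) (u : List (PTrans Q)) : Set Q :=
  u.foldl pApply R

/-! ### The `n`-bit binary counter
Cells: `(0, i) = dᵢ` (tape `S`), `(1, i) = cᵢ` (tape `T`), `(2, i) = c̄ᵢ`
(tape `T̄`). -/

variable (n : ℕ) [NeZero n]

/-- The cell `dᵢ` of the tape `S`. -/
def dCell (i : Fin n) : Fin 3 × Fin n := (0, i)

/-- The cell `cᵢ` of the tape `T`. -/
def cCell (i : Fin n) : Fin 3 × Fin n := (1, i)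

/-- The cell `c̄ᵢ` of the tape `T̄`. -/
def cbarCell (i : Fin n) : Fin 3 × Fin n := (2, i)

/-- `ι_rotl` : cyclic left rotation on all three tapes. -/
def rotl : PTrans (Fin 3 × Fin n) := fun x => some (x.1, x.2 + 1)

/-- `ι_rotr` : cyclic right rotation on all three tapes. -/
def rotr : PTrans (Fin 3 × Fin n) := fun x => some (x.1, x.2 - 1)

/-- `ι_{=0}` : undefined on `c₀`, identity on all other cells. -/
def eqz : PTrans (Fin 3 × Fin n) := fun x => if x = cCell n 0 then none else some x

/-- `ι_{=1}` : undefined on `c̄₀`, identity on all other cells. -/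
def eqo : PTrans (Fin 3 × Fin n) := fun x => if x = cbarCell n 0 then none else some x

/-- `ι_sync` : undefined on `d₁, …, d_{n-1}`, identity on all other cells. -/
def syncI : PTrans (Fin 3 × Fin n) :=
  fun x => if x.1 = 0 ∧ x.2 ≠ 0 then none else some x

/-- `ι_off` : undefined on `d₀`, identity on all other cells. -/
def offI : PTrans (Fin 3 × Fin n) := fun x => if x = dCell n 0 then none else some x

/-- `ι_inc` : maps `c̄₀` to `c₀`, undefined on `c₀`, identity elsewhere. -/
def incI : PTrans (Fin 3 × Fin n) :=
  fun x => if x = cbarCell n 0 then some (cCell n 0)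
    else if x = cCell n 0 then none else some x

/-- `ι_dec` : maps `c₀` to `c̄₀`, undefined on `c̄₀`, identity elsewhere. -/
def decI : PTrans (Fin 3 × Fin n) :=
  fun x => if x = cCell n 0 then some (cbarCell n 0)
    else if x = cbarCell n 0 then none else some x

/-- The instruction set of the `n`-bit binary counter. -/
def counterI : Set (PTrans (Fin 3 × Fin n)) :=
  {rotl n, rotr n, eqz n, eqo n, syncI n, offI n, incI n, decI n}

/-- A configuration is valid if it contains exactly one cell of the tape `S` and,
for each `i`, exactly one of `cᵢ`, `c̄ᵢ`. -/
def ValidConf (R : Set (Fin 3 × Fin n)) : Prop :=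
  (∃! i : Fin n, dCell n i ∈ R) ∧ ∀ i : Fin n, (cCell n i ∈ R ↔ cbarCell n i ∉ R)

open Classical in
/-- The value of the counter under a configuration `R`: `Σ_{i : cᵢ ∈ R} 2^i`. -/
noncomputable def counterValue (R : Set (Fin 3 × Fin n)) : ℕ :=
  ∑ i : Fin n, if cCell n i ∈ R then 2 ^ (i : ℕ) else 0

/-- Membership in the regular language
`L_reset = ι_sync ((ι_{=0} | ι_dec) ι_rotr ι_off)* (ι_{=0} | ι_dec) ι_rotr ι_sync`. -/
def memLreset (u : List (PTrans (Fin 3 × Fin n))) : Prop :=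
  ∃ (bs : List (PTrans (Fin 3 × Fin n))) (b : PTrans (Fin 3 × Fin n)),
    (∀ x ∈ bs, x = eqz n ∨ x = decI n) ∧ (b = eqz n ∨ b = decI n) ∧
    u = syncI n ::
      ((bs.map fun x => [x, rotr n, offI n]).flatten ++ [b, rotr n, syncI n])

/-- Membership in the regular language
`L_inc = ι_sync (ι_dec ι_rotr ι_off)* ι_inc (ι_off ι_rotr)* ι_sync`. -/
def memLinc (u : List (PTrans (Fin 3 × Fin n))) : Prop :=
  ∃ k m : ℕ,
    u = syncI n ::
      ((List.replicate k [decI n, rotr n, offI n]).flatten ++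
        incI n :: ((List.replicate m [offI n, rotr n]).flatten ++ [syncI n]))

/-- Membership in the regular language
`L_dec = ι_sync (ι_inc ι_rotr ι_off)* ι_dec (ι_off ι_rotr)* ι_sync`. -/
def memLdec (u : List (PTrans (Fin 3 × Fin n))) : Prop :=
  ∃ k m : ℕ,
    u = syncI n ::
      ((List.replicate k [incI n, rotr n, offI n]).flatten ++
        decI n :: ((List.replicate m [offI n, rotr n]).flatten ++ [syncI n]))

/-!
No instruction increases the number of tokens, so a word that preserves it must be defined on
every token at every step. Describe a valid configuration by its head position `j` and its bits
`b`, read in the frame of the `r` right rotations made so far. Definedness then forces: the first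
`ι_sync` finds the head on `d₀`; the `t`-th round `ι_inc ι_rotr ι_off` finds bit `t` clear and
sets it, and does not bring the head back to `d₀`, so the number `k` of these rounds is less than
`n`; `ι_dec` finds bit `k` set and clears it; the last `ι_sync` forces the total number of
rotations to vanish mod `n`. The resulting bits are those of `v − 1` (binary borrow).
-/

section PartialTransformations

variable {Q : Type*}

theorem mem_pApply {R : Set Q} {f : PTrans Q} {x : Q} :
    x ∈ pApply R f ↔ ∃ q ∈ R, f q = some x := Iff.rfl

theorem wordApply_singleton (R : Set Q) (f : PTrans Q) : wordApply R [f] = pApply R f := rfl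

theorem wordApply_cons (R : Set Q) (f : PTrans Q) (u : List (PTrans Q)) :
    wordApply R (f :: u) = wordApply (wordApply R [f]) u := rfl

theorem wordApply_append (R : Set Q) (u v : List (PTrans Q)) :
    wordApply R (u ++ v) = wordApply (wordApply R u) v :=
  List.foldl_append

theorem wordApply_singleton_eq_self {R : Set Q} {f : PTrans Q} (h : ∀ q ∈ R, f q = some q) :
    wordApply R [f] = R := by
  ext x
  exact ⟨fun ⟨q, hq, hfq⟩ => Option.some_injective _ ((h q hq).symm.trans hfq) ▸ hq,
    fun hx => ⟨x, hx, h x hx⟩⟩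

def Lossless (R : Set Q) (u : List (PTrans Q)) : Prop := (wordApply R u).ncard = R.ncard

variable [Finite Q]

theorem ncard_pApply_le (R : Set Q) (f : PTrans Q) : (pApply R f).ncard ≤ R.ncard := by
  refine (Set.ncard_le_ncard (t := (fun q => (f q).getD q) '' R) ?_).trans
    (Set.ncard_image_le R.toFinite)
  rintro x ⟨q, hq, hfq⟩
  exact ⟨q, hq, by simp [hfq]⟩

theorem ncard_wordApply_le (R : Set Q) (u : List (PTrans Q)) :
    (wordApply R u).ncard ≤ R.ncard := by
  induction u generalizing R with
  | nil => exact le_rfl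
  | cons f u ih => exact (ih _).trans (ncard_pApply_le R f)

theorem Lossless.append {R : Set Q} {u v : List (PTrans Q)} (h : Lossless R (u ++ v)) :
    Lossless R u ∧ Lossless (wordApply R u) v := by
  unfold Lossless at *
  rw [wordApply_append] at h
  have := ncard_wordApply_le R u
  have := ncard_wordApply_le (wordApply R u) v
  omega

theorem Lossless.cons {R : Set Q} {f : PTrans Q} {u : List (PTrans Q)} (h : Lossless R (f :: u)) :
    Lossless R [f] ∧ Lossless (wordApply R [f]) u :=
  Lossless.append (u := [f]) h

theorem Lossless.isSome {R : Set Q} {f : PTrans Q} (h : Lossless R [f]) {q : Q} (hq : q ∈ R) :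
    (f q).isSome := by
  by_contra hnone
  have hsub : pApply R f ⊆ (fun q => (f q).getD q) '' (R \ {q}) := by
    rintro x ⟨p, hp, hfp⟩
    refine ⟨p, ⟨hp, fun hpq => hnone ?_⟩, by simp [hfp]⟩
    rw [← Set.mem_singleton_iff.1 hpq, hfp]; rfl
  have := (Set.ncard_le_ncard hsub).trans (Set.ncard_image_le R.toFinite.sdiff)
  rw [Set.ncard_sdiff_singleton_of_mem hq] at this
  have := Set.ncard_pos R.toFinite |>.2 ⟨q, hq⟩
  unfold Lossless at h
  rw [wordApply_singleton] at h
  omega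

end PartialTransformations

theorem sum_fin_two_pow_lt_add_one {m k : ℕ} (hk : k ≤ m) :
    ∑ i : Fin m, (if (i : ℕ) < k then 2 ^ (i : ℕ) else 0) + 1 = 2 ^ k := by
  rw [Fin.sum_univ_eq_sum_range (fun i => if i < k then 2 ^ i else 0), ← Finset.sum_filter,
    show (Finset.range m).filter (· < k) = Finset.range k by ext; simp; omega,
    Nat.geomSum_eq le_rfl, Nat.div_one, Nat.sub_add_cancel Nat.one_le_two_pow]

namespace BinaryCounter

open Fin.NatCast

/-- The valid configuration with head `dⱼ` and bits `b`, seen after `r` right rotations: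
cell `(t, i)` of the rotated tapes holds what cell `(t, i + r)` held originally. -/
def conf (r j : Fin n) (b : Fin n → Bool) : Set (Fin 3 × Fin n) :=
  {x | x.1 = 0 ∧ x.2 + r = j ∨ x.1 = 1 ∧ b (x.2 + r) = true ∨ x.1 = 2 ∧ b (x.2 + r) = false}

def decWord (k m : ℕ) : List (PTrans (Fin 3 × Fin n)) :=
  syncI n :: ((List.replicate k [incI n, rotr n, offI n]).flatten ++
    decI n :: ((List.replicate m [offI n, rotr n]).flatten ++ [syncI n]))

variable {n}

theorem ValidConf.eq_conf {R : Set (Fin 3 × Fin n)} (hR : ValidConf n R) :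
    ∃ j b, R = conf n 0 j b := by
  classical
  obtain ⟨⟨j, hj, hj_uniq⟩, hbit⟩ := hR
  refine ⟨j, fun i => decide (cCell n i ∈ R), ?_⟩
  ext ⟨t, i⟩
  have := hj_uniq i
  have := hbit i
  fin_cases t <;> simp [conf, dCell, cCell, cbarCell] at * <;> grind

theorem wordApply_conf_rotr (r j : Fin n) (b : Fin n → Bool) :
    wordApply (conf n r j b) [rotr n] = conf n (r + 1) j b := by
  ext ⟨t, i⟩
  simp only [wordApply_singleton, mem_pApply, rotr, conf, Set.mem_ofPred_eq, Option.some.injEq,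
    Prod.exists, Prod.mk.injEq]
  constructor
  · rintro ⟨t', i', h, rfl, rfl⟩
    simpa [add_assoc] using h
  · intro h
    exact ⟨t, i + 1, by simpa [add_assoc, add_comm 1 r] using h, rfl, by simp⟩

def bitsValue (b : Fin n → Bool) : ℕ := ∑ i, if b i then 2 ^ (i : ℕ) else 0

theorem counterValue_conf (j : Fin n) (b : Fin n → Bool) :
    counterValue n (conf n 0 j b) = bitsValue b := by
  classical
  simp [counterValue, bitsValue, conf, cCell]

theorem bitsValue_borrow {k : ℕ} (hk : k < n) {b : Fin n → Bool}
    (hlow : ∀ i : Fin n, (i : ℕ) < k → b i = false) (hbk : b k = true) :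
    bitsValue (Function.update (fun i => decide ((i : ℕ) < k) || b i) k false) + 1 =
      bitsValue b := by
  have hkval : ((k : Fin n) : ℕ) = k := Fin.val_cast_of_lt hk
  have hpoint : ∀ i : Fin n,
      (if Function.update (fun i : Fin n => decide ((i : ℕ) < k) || b i) (k : Fin n) false i
          then 2 ^ (i : ℕ) else 0)
        + (if i = k then 2 ^ (i : ℕ) else 0) =
      (if b i then 2 ^ (i : ℕ) else 0) + (if (i : ℕ) < k then 2 ^ (i : ℕ) else 0) := by
    intro i
    by_cases hik : i = k
    · subst hik; simp [hbk, hkval]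
    · by_cases hlt : (i : ℕ) < k <;> simp [hik, hlt, hlow]
  have hsum := Finset.sum_congr rfl fun i (_ : i ∈ Finset.univ) => hpoint i
  rw [Finset.sum_add_distrib, Finset.sum_add_distrib, Finset.sum_ite_eq', if_pos (Finset.mem_univ _),
    hkval] at hsum
  have := sum_fin_two_pow_lt_add_one hk.le
  unfold bitsValue
  omega

end BinaryCounter

namespace Lossless

open BinaryCounter Fin.NatCast

variable {n} {r j : Fin n} {b : Fin n → Bool}

theorem conf_sync (h : Lossless (conf n r j b) [syncI n]) :
    j = r ∧ wordApply (conf n r j b) [syncI n] = conf n r j b := by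
  have hj : j = r := by
    simpa [syncI, sub_eq_zero] using h.isSome (q := (0, j - r)) (by simp [conf])
  refine ⟨hj, wordApply_singleton_eq_self ?_⟩
  rintro ⟨t, i⟩ hq
  simp only [conf, Set.mem_ofPred_eq] at hq
  simp only [syncI, ite_eq_right_iff]
  grind

theorem conf_off (h : Lossless (conf n r j b) [offI n]) :
    j ≠ r ∧ wordApply (conf n r j b) [offI n] = conf n r j b := by
  have hj : j ≠ r := by
    simpa [offI, dCell, sub_eq_zero] using h.isSome (q := (0, j - r)) (by simp [conf])
  refine ⟨hj, wordApply_singleton_eq_self ?_⟩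
  rintro ⟨t, i⟩ hq
  simp only [conf, Set.mem_ofPred_eq] at hq
  simp only [offI, dCell, ite_eq_right_iff, Prod.mk.injEq]
  grind

theorem conf_inc (h : Lossless (conf n r j b) [incI n]) :
    b r = false ∧ wordApply (conf n r j b) [incI n] = conf n r j (Function.update b r true) := by
  have hb : b r = false := by
    by_contra hb
    simpa [incI, cCell, cbarCell] using h.isSome (q := cCell n 0) (by simpa [conf, cCell] using hb)
  refine ⟨hb, ?_⟩
  ext ⟨t, i⟩
  simp only [wordApply_singleton, mem_pApply, incI, conf, cCell, cbarCell, Set.mem_ofPred_eq,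
    Prod.exists, Prod.mk.injEq, Function.update_apply]
  fin_cases t <;> simp <;> grind

theorem conf_dec (h : Lossless (conf n r j b) [decI n]) :
    b r = true ∧ wordApply (conf n r j b) [decI n] = conf n r j (Function.update b r false) := by
  have hb : b r = true := by
    by_contra hb
    simpa [decI, cCell, cbarCell] using h.isSome (q := cbarCell n 0) (by simpa [conf, cbarCell] using hb)
  refine ⟨hb, ?_⟩
  ext ⟨t, i⟩
  simp only [wordApply_singleton, mem_pApply, decI, conf, cCell, cbarCell, Set.mem_ofPred_eq,
    Prod.exists, Prod.mk.injEq, Function.update_apply]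
  fin_cases t <;> simp <;> grind

theorem conf_incRound (h : Lossless (conf n r j b) [incI n, rotr n, offI n]) :
    b r = false ∧ j ≠ r + 1 ∧
      wordApply (conf n r j b) [incI n, rotr n, offI n] =
        conf n (r + 1) j (Function.update b r true) := by
  obtain ⟨hinc, h⟩ := h.cons
  obtain ⟨hb, hinc⟩ := hinc.conf_inc
  rw [hinc] at h
  obtain ⟨-, hoff⟩ := h.cons
  rw [wordApply_conf_rotr] at hoff
  obtain ⟨hj, hoff⟩ := hoff.conf_off
  refine ⟨hb, hj, ?_⟩
  rw [wordApply_cons, hinc, wordApply_cons, wordApply_conf_rotr, hoff]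

theorem conf_offRound (h : Lossless (conf n r j b) [offI n, rotr n]) :
    wordApply (conf n r j b) [offI n, rotr n] = conf n (r + 1) j b := by
  rw [wordApply_cons, h.cons.1.conf_off.2, wordApply_conf_rotr]

theorem conf_offRounds (m : ℕ)
    (h : Lossless (conf n r j b) (List.replicate m [offI n, rotr n]).flatten) :
    wordApply (conf n r j b) (List.replicate m [offI n, rotr n]).flatten = conf n (r + m) j b := by
  induction m generalizing r with
  | zero => simp [wordApply]
  | succ m ih =>
    rw [List.replicate_succ, List.flatten_cons] at h ⊢
    obtain ⟨hround, h⟩ := h.append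
    rw [hround.conf_offRound] at h
    rw [wordApply_append, hround.conf_offRound, ih h, Nat.cast_succ, add_comm (m : Fin n),
      add_assoc]

theorem conf_incRounds (k : ℕ) {b : Fin n → Bool}
    (h : Lossless (conf n 0 0 b) (List.replicate k [incI n, rotr n, offI n]).flatten) :
    k < n ∧ (∀ i : Fin n, (i : ℕ) < k → b i = false) ∧
      wordApply (conf n 0 0 b) (List.replicate k [incI n, rotr n, offI n]).flatten =
        conf n k 0 (fun i => decide ((i : ℕ) < k) || b i) := by
  induction k with
  | zero => simpa [wordApply] using Nat.pos_of_neZero n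
  | succ k ih =>
    rw [List.replicate_succ', List.flatten_append, List.flatten_singleton] at h ⊢
    obtain ⟨h, hround⟩ := h.append
    obtain ⟨hk, hb, heq⟩ := ih h
    rw [heq] at hround
    obtain ⟨hbk, hj, hround⟩ := hround.conf_incRound
    have hkval : ((k : Fin n) : ℕ) = k := Fin.val_cast_of_lt hk
    have hk_eq : ∀ i : Fin n, i = k ↔ (i : ℕ) = k := by simp [Fin.ext_iff, hkval]
    refine ⟨?_, fun i hi => ?_, ?_⟩
    · by_contra hkn
      exact hj (by rw [← Nat.cast_succ, show k.succ = n by omega, Fin.natCast_self])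
    · rcases (Nat.lt_succ_iff_lt_or_eq.1 hi) with hi | hi
      · exact hb i hi
      · simpa [(hk_eq i).2 hi, hkval] using hbk
    · rw [wordApply_append, heq, hround, Nat.cast_succ]
      congr 1
      funext i
      simp only [Function.update_apply, hk_eq]
      grind

theorem conf_decWord (k m : ℕ) (h : Lossless (conf n 0 j b) (decWord n k m)) :
    k < n ∧ (∀ i : Fin n, (i : ℕ) < k → b i = false) ∧ b k = true ∧
      wordApply (conf n 0 j b) (decWord n k m) =
        conf n 0 0 (Function.update (fun i => decide ((i : ℕ) < k) || b i) k false) := by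
  unfold decWord at h ⊢
  obtain ⟨hsync, h⟩ := h.cons
  obtain ⟨rfl, hsync⟩ := hsync.conf_sync
  rw [hsync] at h
  obtain ⟨hinc, h⟩ := h.append
  obtain ⟨hk, hlow, hinc⟩ := hinc.conf_incRounds k
  rw [hinc] at h
  obtain ⟨hdec, h⟩ := h.cons
  obtain ⟨hbk, hdec⟩ := hdec.conf_dec
  rw [hdec] at h
  obtain ⟨hoff, h⟩ := h.append
  rw [hoff.conf_offRounds m] at h
  obtain ⟨hkm, hsync'⟩ := h.conf_sync
  refine ⟨hk, hlow, by simpa [Fin.val_cast_of_lt hk] using hbk, ?_⟩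
  rw [wordApply_cons, hsync, wordApply_append, hinc, wordApply_cons, hdec, wordApply_append,
    hoff.conf_offRounds m, hsync', ← hkm]

end Lossless

open BinaryCounter

/-- Applying a cardinality-preserving word of `L_dec` to a
valid configuration of an `n`-bit binary counter decrements its value by one;
in particular the value before was at least `1`. -/
theorem counter_decrement
    (R : Set (Fin 3 × Fin n)) (hR : ValidConf n R)
    (u : List (PTrans (Fin 3 × Fin n))) (hu : memLdec n u)
    (hcard : (wordApply R u).ncard = R.ncard) :
    1 ≤ counterValue n R ∧
    counterValue n (wordApply R u) = counterValue n R - 1 := by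
  obtain ⟨k, m, rfl : u = decWord n k m⟩ := hu
  obtain ⟨j, b, rfl⟩ := hR.eq_conf
  obtain ⟨hk, hlow, hbk, hrun⟩ := Lossless.conf_decWord k m hcard
  have hborrow := bitsValue_borrow hk hlow hbk
  rw [hrun, counterValue_conf, counterValue_conf]
  omega
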